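/- Let L be the subgroup of ℤ³ ⊕ ℤ³ (with standard basis x₁,x₂,x₃ for the first summand and y₁,y₂,y₃ for the second) consisting of all vectors (a,b) with a₁+a₂+a₃ ≡ b₁+b₂+b₃ (mod 4) and a₁+a₂+a₃ ≡ 0 (mod 2). Then the 6 vectors x₁−x₂, x₁−x₃, y₁−y₂, y₁−y₃, 2x₁+2y₁, 2x₁−2y₁ form a ℤ-basis of L. (This is the basis (7.1) of the character group T_H^* of a maximal torus of (SL₄×SL₄)/μ computed in Lemma 7.1 of the paper.) -/

import Mathlib

/-- The standard basis vector `x_i` of the first summand of `ℤ³ ⊕ ℤ³`. -/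
def xv (i : Fin 3) : (Fin 3 → ℤ) × (Fin 3 → ℤ) := (Pi.single i 1, 0)

/-- The standard basis vector `y_i` of the second summand of `ℤ³ ⊕ ℤ³`. -/
def yv (i : Fin 3) : (Fin 3 → ℤ) × (Fin 3 → ℤ) := (0, Pi.single i 1)

/-!
The coordinate sums of a combination `∑ gᵢ bᵢ` of the six vectors are `2(g₄ + g₅)` and
`2(g₄ - g₅)`: even, and differing by `4g₅`. Conversely, a vector of the lattice determines the
coefficients: `g₀,…,g₃` are minus its last two coordinates in each summand, and `g₄, g₅` are a
quarter of the sum and of the difference of its two coordinate sums. The same formulas force a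
vanishing combination to be zero.
-/

def latticeBasis : Fin 6 → (Fin 3 → ℤ) × (Fin 3 → ℤ) :=
  ![xv 0 - xv 1, xv 0 - xv 2, yv 0 - yv 1, yv 0 - yv 2, 2 • xv 0 + 2 • yv 0, 2 • xv 0 - 2 • yv 0]

def charLattice : Set ((Fin 3 → ℤ) × (Fin 3 → ℤ)) :=
  {v | (∑ i, v.1 i) ≡ (∑ i, v.2 i) [ZMOD 4] ∧ (∑ i, v.1 i) ≡ 0 [ZMOD 2]}

theorem sum_smul_latticeBasis (g : Fin 6 → ℤ) :
    ∑ i, g i • latticeBasis i =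
      (![g 0 + g 1 + 2 * g 4 + 2 * g 5, -g 0, -g 1],
        ![g 2 + g 3 + 2 * g 4 - 2 * g 5, -g 2, -g 3]) := by
  ext j <;> fin_cases j <;>
    simp [latticeBasis, Fin.sum_univ_six, xv, yv] <;> ring

theorem linearIndependent_latticeBasis : LinearIndependent ℤ latticeBasis := by
  rw [Fintype.linearIndependent_iff]
  intro g hg
  rw [sum_smul_latticeBasis] at hg
  simp only [Prod.ext_iff, funext_iff, Fin.forall_fin_succ, Matrix.cons_val_zero,
    Matrix.cons_val_succ, Matrix.cons_val_fin_one, Prod.fst_zero, Prod.snd_zero, Pi.zero_apply,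
    neg_eq_zero, forall_const] at hg
  intro i
  fin_cases i <;> simp <;> omega

theorem span_latticeBasis :
    (Submodule.span ℤ (Set.range latticeBasis) : Set ((Fin 3 → ℤ) × (Fin 3 → ℤ))) =
      charLattice := by
  ext v
  rw [SetLike.mem_coe, Submodule.mem_span_range_iff_exists_fun]
  simp only [charLattice, Set.mem_ofPred_eq, Int.ModEq, Fin.sum_univ_three]
  constructor
  · rintro ⟨g, rfl⟩
    rw [sum_smul_latticeBasis]
    simp only [Matrix.cons_val_zero, Matrix.cons_val_one, Matrix.cons_val_two, Matrix.tail_cons,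
      Matrix.head_cons]
    omega
  · rintro ⟨h4, h2⟩
    refine ⟨![-v.1 1, -v.1 2, -v.2 1, -v.2 2,
      (∑ i, v.1 i + ∑ i, v.2 i) / 4, (∑ i, v.1 i - ∑ i, v.2 i) / 4], ?_⟩
    rw [sum_smul_latticeBasis]
    ext j <;> fin_cases j <;> simp [Fin.sum_univ_three] <;> omega

/-- The basis (7.1) of the character lattice `T_H^*` of a maximal torus of `(SL₄×SL₄)/μ`
computed in Lemma 7.1. -/
theorem stmt_14 :
    LinearIndependent ℤ
      ![xv 0 - xv 1, xv 0 - xv 2, yv 0 - yv 1, yv 0 - yv 2,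
        2 • xv 0 + 2 • yv 0, 2 • xv 0 - 2 • yv 0] ∧
    (Submodule.span ℤ (Set.range
      ![xv 0 - xv 1, xv 0 - xv 2, yv 0 - yv 1, yv 0 - yv 2,
        2 • xv 0 + 2 • yv 0, 2 • xv 0 - 2 • yv 0]) : Set ((Fin 3 → ℤ) × (Fin 3 → ℤ))) =
      {v : (Fin 3 → ℤ) × (Fin 3 → ℤ) |
        (∑ i, v.1 i) ≡ (∑ i, v.2 i) [ZMOD 4] ∧ (∑ i, v.1 i) ≡ 0 [ZMOD 2]} :=
  ⟨linearIndependent_latticeBasis, span_latticeBasis⟩
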